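/- Every finite group generated by two subnormal supersoluble subgroups is soluble. -/

import Mathlib

/-- A subgroup `H` of `G` is subnormal if there is a chain
`H = c 0 ≤ c 1 ≤ ... ≤ c n = G` with each term normal in the next. -/
def Subgroup.IsSubnormal' {G : Type*} [Group G] (H : Subgroup G) : Prop :=
  ∃ (n : ℕ) (c : Fin (n + 1) → Subgroup G),
    c 0 = H ∧ c (Fin.last n) = ⊤ ∧
    ∀ i : Fin n, c i.castSucc ≤ c i.succ ∧
      ((c i.castSucc).subgroupOf (c i.succ)).Normal

/-- A group is supersoluble if it has a normal series (all terms normal in `G`)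
with cyclic factors; the factor `c (i+1) / c i` being cyclic is expressed as
`c (i+1)` being generated by `c i` together with a single element. -/
def IsSupersolvable (G : Type*) [Group G] : Prop :=
  ∃ (n : ℕ) (c : Fin (n + 1) → Subgroup G),
    c 0 = ⊥ ∧ c (Fin.last n) = ⊤ ∧
    (∀ i, (c i).Normal) ∧
    ∀ i : Fin n, c i.castSucc ≤ c i.succ ∧
      ∃ g ∈ c i.succ, c i.succ ≤ c i.castSucc ⊔ Subgroup.zpowers g

/-- The Fitting subgroup: the join of all normal nilpotent subgroups
(in a finite group, the largest normal nilpotent subgroup). -/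
def fittingSubgroup (G : Type*) [Group G] : Subgroup G :=
  sSup {N : Subgroup G | N.Normal ∧ Group.IsNilpotent N}

instance fittingSubgroup_normal (G : Type*) [Group G] : (fittingSubgroup G).Normal := by
  constructor
  intro x hx g
  rw [fittingSubgroup, sSup_eq_iSup'] at hx ⊢
  refine Subgroup.iSup_induction
    (C := fun y => g * y * g⁻¹ ∈
      ⨆ (N : {N : Subgroup G // N.Normal ∧ Group.IsNilpotent N}), (N : Subgroup G))
    _ hx (fun N y hy => ?_) (by simpa using Subgroup.one_mem _) (fun y z hy hz => ?_)
  · exact Subgroup.mem_iSup_of_mem N (N.2.1.conj_mem y hy g)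
  · simpa [mul_assoc] using Subgroup.mul_mem _ hy hz

/-- `O_p(G)`: the join of all normal `p`-subgroups
(in a finite group, the largest normal `p`-subgroup). -/
def pCore (p : ℕ) (G : Type*) [Group G] : Subgroup G :=
  sSup {N : Subgroup G | N.Normal ∧ IsPGroup p N}

instance pCore_normal (p : ℕ) (G : Type*) [Group G] : (pCore p G).Normal := by
  constructor
  intro x hx g
  rw [pCore, sSup_eq_iSup'] at hx ⊢
  refine Subgroup.iSup_induction
    (C := fun y => g * y * g⁻¹ ∈
      ⨆ (N : {N : Subgroup G // N.Normal ∧ IsPGroup p N}), (N : Subgroup G))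
    _ hx (fun N y hy => ?_) (by simpa using Subgroup.one_mem _) (fun y z hy hz => ?_)
  · exact Subgroup.mem_iSup_of_mem N (N.2.1.conj_mem y hy g)
  · simpa [mul_assoc] using Subgroup.mul_mem _ hy hz

/-- `G` has a Sylow tower of supersoluble type: a normal series `⊥ = c 0 ≤ ... ≤ c n = ⊤`
(all terms normal in `G`) together with strictly decreasing primes `p 0 > p 1 > ... `
exhausting the primes dividing `|G|`, such that each factor `c (i+1) / c i` is a
Sylow `p i`-subgroup of `G / c i` (i.e. has order the full `p i`-part of `|G|`). -/
def HasSupersolubleSylowTower (G : Type*) [Group G] : Prop :=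
  ∃ (n : ℕ) (c : Fin (n + 1) → Subgroup G) (p : Fin n → ℕ),
    c 0 = ⊥ ∧ c (Fin.last n) = ⊤ ∧
    (∀ i, (c i).Normal) ∧
    (∀ i : Fin n, c i.castSucc ≤ c i.succ) ∧
    (∀ i, (p i).Prime) ∧
    (∀ i j : Fin n, i < j → p j < p i) ∧
    (∀ q : ℕ, q.Prime → q ∣ Nat.card G → ∃ i, p i = q) ∧
    (∀ i : Fin n,
      Nat.card (c i.succ) = Nat.card (c i.castSucc) * p i ^ (Nat.card G).factorization (p i))

/-!
A supersoluble group is soluble, and in a finite group every subnormal soluble subgroup lies in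
the soluble radical, the largest normal soluble subgroup. For the latter, a proper subnormal
subgroup `H` lies in a proper normal subgroup `K`; by induction on the order, `H` lies in the
soluble radical of `K`, which is characteristic in `K` and hence a normal soluble subgroup of `G`.
So two subnormal supersoluble subgroups generating `G` both lie in its soluble radical, which is
then all of `G`.
-/

open Subgroup

namespace Subgroup

theorem IsSubnormal'.isSubnormal {G : Type*} [Group G] {H : Subgroup G} (hH : H.IsSubnormal') :
    H.IsSubnormal := by
  obtain ⟨n, c, rfl, hc_last, hc⟩ := hH
  induction n with
  | zero => exact hc_last ▸ IsSubnormal.top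
  | succ n ih =>
    exact IsSubnormal.step _ (c 1) (hc 0).1
      (ih (fun i => c i.succ) hc_last fun i => hc i.succ) (hc 0).2

end Subgroup

namespace Group

variable {G : Type*} [Group G]

theorem isSolvable_of_le {H K : Subgroup G} (hHK : H ≤ K) [IsSolvable K] :
    IsSolvable H :=
  isSolvable_of_isSolvable_injective (inclusion_injective hHK)

theorem isSolvable_of_isSolvable_top [IsSolvable (⊤ : Subgroup G)] : IsSolvable G :=
  isSolvable_of_surjective (f := (topEquiv (G := G)).toMonoidHom) topEquiv.surjective

theorem isSolvable_map {G' : Type*} [Group G'] (f : G →* G') (H : Subgroup G) [IsSolvable H] :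
    IsSolvable (H.map f) :=
  isSolvable_of_surjective (f.subgroupMap_surjective H)

theorem isSolvable_sup_of_normal (H N : Subgroup G) [N.Normal] [IsSolvable H]
    [IsSolvable N] : IsSolvable ↥(H ⊔ N) := by
  have : IsSolvable (N.subgroupOf (H ⊔ N)) :=
    isSolvable_of_isSolvable_injective
      (f := (subgroupOfEquivOfLe (le_sup_right : N ≤ H ⊔ N)).toMonoidHom)
      (subgroupOfEquivOfLe _).injective
  have : IsSolvable (↥(H ⊔ N) ⧸ N.subgroupOf (H ⊔ N)) :=
    isSolvable_of_surjective
      (f := (QuotientGroup.quotientInfEquivProdNormalQuotient H N).toMonoidHom)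
      (QuotientGroup.quotientInfEquivProdNormalQuotient H N).surjective
  exact (isSolvable_iff_subgroup_quotient (N.subgroupOf (H ⊔ N))).2 ⟨‹_›, ‹_›⟩

theorem _root_.IsSupersolvable.isSolvable (hG : IsSupersolvable G) : IsSolvable G := by
  obtain ⟨n, c, hc_zero, hc_last, hc_normal, hc⟩ := hG
  have hc_solvable : ∀ i, IsSolvable (c i) := by
    intro i
    induction i using Fin.induction with
    | zero => rw [hc_zero]; infer_instance
    | succ i ih =>
      obtain ⟨-, g, -, hg⟩ := hc i
      have := hc_normal i.castSucc
      have : IsSolvable (zpowers g) := isSolvable_of_comm mul_comm'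
      have := isSolvable_sup_of_normal (zpowers g) (c i.castSucc)
      exact isSolvable_of_le (sup_comm (c i.castSucc) (zpowers g) ▸ hg)
  have := hc_solvable (Fin.last n)
  rw [hc_last] at this
  exact isSolvable_of_isSolvable_top

end Group

section SolvableRadical

open Group

def solvableRadical (G : Type*) [Group G] : Subgroup G :=
  sSup {N : Subgroup G | N.Normal ∧ Group.IsSolvable N}

variable {G : Type*} [Group G]

instance solvableRadical_normal : (solvableRadical G).Normal :=
  sSup_normal _ fun _ hN => hN.1

theorem le_solvableRadical (N : Subgroup G) [hN : N.Normal] [hN' : Group.IsSolvable N] :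
    N ≤ solvableRadical G :=
  le_sSup ⟨hN, hN'⟩

instance solvableRadical_characteristic : (solvableRadical G).Characteristic := by
  refine characteristic_iff_map_le.2 fun φ => ?_
  rw [solvableRadical, (gc_map_comap φ.toMonoidHom).l_sSup]
  refine iSup₂_le fun N ⟨hN, hN'⟩ => ?_
  exact le_sSup ⟨hN.map _ φ.surjective, isSolvable_map _ N⟩

instance isSolvable_solvableRadical [Finite G] : Group.IsSolvable (solvableRadical G) := by
  obtain ⟨M, ⟨hM, hM'⟩, hM_max⟩ :=
    (Set.toFinite {N : Subgroup G | N.Normal ∧ Group.IsSolvable N}).exists_maximal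
      ⟨⊥, normal_bot, inferInstance⟩
  suffices solvableRadical G = M from this ▸ hM'
  refine le_antisymm (sSup_le fun N ⟨hN, hN'⟩ => ?_) (le_sSup ⟨hM, hM'⟩)
  have := isSolvable_sup_of_normal N M
  exact le_sup_left.trans (hM_max ⟨sup_normal N M, this⟩ le_sup_right)

theorem map_subtype_solvableRadical_le [Finite G] (K : Subgroup G) [K.Normal] :
    (solvableRadical K).map K.subtype ≤ solvableRadical G :=
  have := isSolvable_map K.subtype (solvableRadical K)
  le_solvableRadical _

theorem Subgroup.IsSubnormal.le_solvableRadical [Finite G] {H : Subgroup G} (hH : H.IsSubnormal) [Group.IsSolvable H] : H ≤ solvableRadical G := by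
  induction h : Nat.card G using Nat.strong_induction_on generalizing G with
  | _ n ih =>
  obtain rfl | ⟨K, hK, hHK, hK_lt⟩ := hH.lt_normal
  · exact _root_.le_solvableRadical ⊤
  have hK_card : Nat.card K < n :=
    h ▸ (card_le_card_group K).lt_of_ne fun h' => hK_lt.ne (eq_top_of_card_eq K h')
  have : Group.IsSolvable (H.subgroupOf K) := isSolvable_of_isSolvable_injective
    (f := (subgroupOfEquivOfLe hHK).toMonoidHom) (MulEquiv.injective _)
  have := ih _ hK_card hH.subgroupOf rfl
  calc H = (H.subgroupOf K).map K.subtype := (map_subgroupOf_eq_of_le hHK).symm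
    _ ≤ (solvableRadical K).map K.subtype := map_mono this
    _ ≤ solvableRadical G := map_subtype_solvableRadical_le K

end SolvableRadical

/-- Every finite group generated by two subnormal supersoluble subgroups is
soluble. -/
theorem stmt_18 {G : Type*} [Group G] [Finite G] (A B : Subgroup G)
    (hA : A.IsSubnormal') (hB : B.IsSubnormal')
    (hAs : IsSupersolvable A) (hBs : IsSupersolvable B)
    (hgen : A ⊔ B = ⊤) :
    IsSolvable G := by
  have := hAs.isSolvable
  have := hBs.isSolvable
  have hA_le := hA.isSubnormal.le_solvableRadical
  have hB_le := hB.isSubnormal.le_solvableRadical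
  have hR : solvableRadical G = ⊤ := top_unique (hgen ▸ sup_le hA_le hB_le)
  have : Group.IsSolvable (⊤ : Subgroup G) := hR ▸ isSolvable_solvableRadical
  exact Group.isSolvable_of_isSolvable_top
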